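/- arXiv:2310.17303 — 4 statements merged into one kernel-verified Lean document; each statement's English description precedes it below -/
import Mathlib

section
/- Let p and q be probability distributions on a finite set S with p absolutely continuous w.r.t. q, and let f : S → [0, b]. Then p f − q f ≤ sqrt(2 · Var_q(f) · KL(p ‖ q)) + (b/3) · KL(p ‖ q), where p f denotes the expectation of f under p and Var_q(f) the variance of f under q. -/
open Finset Real

lemma expA' {x : ℝ} (hx : x ≤ 0) : Real.exp x ≤ 1 + x + x^2/2 := by
  have hH : ∀ y : ℝ, HasDerivAt (fun t => (1 + t + t^2/2) * Real.exp (-t))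
      (-(y^2/2) * Real.exp (-y)) y := by
    intro y
    have h1 : HasDerivAt (fun t : ℝ => 1 + t + t^2/2) (1 + y) y := by
      have := ((hasDerivAt_id y).const_add 1).add (((hasDerivAt_pow 2 y)).div_const 2)
      refine this.congr_deriv ?_
      ring
    have h2 : HasDerivAt (fun t : ℝ => Real.exp (-t)) (-Real.exp (-y)) y := by
      simpa using (hasDerivAt_neg y).exp
    have := h1.mul h2
    refine this.congr_deriv ?_
    ring
  have hanti : AntitoneOn (fun t => (1 + t + t^2/2) * Real.exp (-t)) (Set.Iic 0) := by
    apply antitoneOn_of_hasDerivWithinAt_nonpos (convex_Iic 0)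
      (Continuous.continuousOn (by continuity))
      (fun y _ => (hH y).hasDerivWithinAt)
    intro y _
    have : (0:ℝ) ≤ y^2/2 * Real.exp (-y) := by positivity
    nlinarith
  have h0 : (1 + x + x^2/2) * Real.exp (-x) ≥ 1 := by
    have := hanti (Set.mem_Iic.2 hx) (Set.mem_Iic.2 le_rfl) hx
    simpa using this
  have hex : (0:ℝ) < Real.exp x := Real.exp_pos x
  have := mul_le_mul_of_nonneg_right h0 hex.le
  rw [mul_assoc, ← Real.exp_add] at this
  simpa using this

lemma expB' {x : ℝ} (hx0 : 0 ≤ x) (hx3 : x < 3) :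
    Real.exp x ≤ 1 + x + 3*x^2/(2*(3-x)) := by
  set G : ℝ → ℝ := fun t => (1 + t + 3*t^2/(2*(3-t))) * Real.exp (-t) with hG
  have hD : ∀ y : ℝ, y < 3 → HasDerivAt G
      (y^3/(2*(3-y)^2) * Real.exp (-y)) y := by
    intro y hy
    have hne : 2*(3-y) ≠ 0 := by intro h; nlinarith
    have h1 : HasDerivAt (fun t : ℝ => 1 + t + 3*t^2/(2*(3-t)))
        (1 + (6*y*(2*(3-y)) - 3*y^2*(-2))/(2*(3-y))^2) y := by
      have hu : HasDerivAt (fun t : ℝ => 3*t^2) (6*y) y := by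
        have := (hasDerivAt_pow 2 y).const_mul (3:ℝ)
        refine this.congr_deriv ?_; ring
      have hv : HasDerivAt (fun t : ℝ => 2*(3-t)) (-2 : ℝ) y := by
        have := ((hasDerivAt_id y).const_sub 3).const_mul (2:ℝ)
        refine this.congr_deriv ?_; ring
      have hdiv := hu.div hv hne
      have := ((hasDerivAt_id y).const_add 1).add hdiv
      exact this
    have h2 : HasDerivAt (fun t : ℝ => Real.exp (-t)) (-Real.exp (-y)) y := by
      simpa using (hasDerivAt_neg y).exp
    have hprod := h1.mul h2
    refine hprod.congr_deriv ?_
    have h3 : (3:ℝ) - y ≠ 0 := by intro h; nlinarith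
    field_simp
    ring
  have hmono : MonotoneOn G (Set.Ico 0 3) := by
    apply monotoneOn_of_hasDerivWithinAt_nonneg (convex_Ico 0 3)
    · apply ContinuousOn.mul
      · apply ContinuousOn.add
        · exact (continuous_const.add continuous_id).continuousOn
        · apply ContinuousOn.div
          · exact (by continuity : Continuous fun t:ℝ => 3*t^2).continuousOn
          · exact (by continuity : Continuous fun t:ℝ => 2*(3-t)).continuousOn
          · intro t ht
            have := ht.2
            intro h; nlinarith
      · exact (by continuity : Continuous fun t:ℝ => Real.exp (-t)).continuousOn
    · intro y hy
      rw [interior_Ico] at hy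
      exact ((hD y hy.2).hasDerivWithinAt)
    · intro y hy
      rw [interior_Ico] at hy
      have h1 : (0:ℝ) < y := hy.1
      have h2 : y < 3 := hy.2
      positivity
  have hge := hmono (by constructor <;> norm_num) (⟨hx0, hx3⟩ : x ∈ Set.Ico (0:ℝ) 3) hx0
  have hG0 : G 0 = 1 := by simp [hG]
  rw [hG0] at hge
  have hex : (0:ℝ) < Real.exp x := Real.exp_pos x
  have := mul_le_mul_of_nonneg_right hge hex.le
  simp only [hG] at this
  rw [mul_assoc, ← Real.exp_add] at this
  simpa using this

lemma expC' {x c : ℝ} (hx : x ≤ c) (hc0 : 0 ≤ c) (hc3 : c < 3) :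
    Real.exp x ≤ 1 + x + x^2/(2*(1 - c/3)) := by
  have hd : (0:ℝ) < 2*(1 - c/3) := by nlinarith
  rcases le_or_gt x 0 with h | h
  · have := expA' h
    have h2 : x^2/2 ≤ x^2/(2*(1 - c/3)) := by
      apply div_le_div_of_nonneg_left (by positivity) hd
      nlinarith
    linarith
  · have := expB' h.le (lt_of_le_of_lt hx hc3)
    have hx3 : x < 3 := lt_of_le_of_lt hx hc3
    have h2 : 3*x^2/(2*(3-x)) ≤ x^2/(2*(1 - c/3)) := by
      rw [show 2*(1 - c/3) = 2*(3-c)/3 by ring]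
      rw [div_div_eq_mul_div, div_le_div_iff₀ (by nlinarith) (by nlinarith)]
      nlinarith [sq_nonneg x]
    linarith

lemma gibbs_term {p q x : ℝ} (hp : 0 ≤ p) (hq : 0 ≤ q) (hac : q = 0 → p = 0) :
    p * x - p * Real.log (p / q) ≤ q * Real.exp x - p := by
  rcases eq_or_lt_of_le hp with h | h
  · simp [← h]
    positivity
  · have hq' : 0 < q := by
      rcases eq_or_lt_of_le hq with h2 | h2
      · exact absurd (hac h2.symm) (by linarith)
      · exact h2
    have hu : (0:ℝ) < q / p * Real.exp x := by positivity
    have key := Real.log_le_sub_one_of_pos hu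
    rw [Real.log_mul (by positivity) (Real.exp_ne_zero x), Real.log_exp,
      Real.log_div hq'.ne' h.ne'] at key
    rw [Real.log_div h.ne' hq'.ne']
    have h2 := mul_le_mul_of_nonneg_left key hp
    have h3 : p * (q / p * Real.exp x) = q * Real.exp x := by field_simp
    nlinarith

lemma kl_term {p q : ℝ} (hp : 0 ≤ p) (hq : 0 ≤ q) (hac : q = 0 → p = 0) :
    p - q ≤ p * Real.log (p / q) := by
  rcases eq_or_lt_of_le hp with h | h
  · simp [← h, hq]
  · have hq' : 0 < q := by
      rcases eq_or_lt_of_le hq with h2 | h2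
      · exact absurd (hac h2.symm) (by linarith)
      · exact h2
    have hu : (0:ℝ) < q / p := by positivity
    have key := Real.log_le_sub_one_of_pos hu
    rw [Real.log_div hq'.ne' h.ne'] at key
    rw [Real.log_div h.ne' hq'.ne']
    have h2 := mul_le_mul_of_nonneg_left key hp
    have h3 : p * (q / p) = q := by field_simp
    nlinarith

lemma bern_core {S : Type*} [Fintype S] (p q : S → ℝ) (f : S → ℝ) (b lam : ℝ)
    (hp0 : ∀ s, 0 ≤ p s) (hp1 : ∑ s, p s = 1)
    (hq0 : ∀ s, 0 ≤ q s) (hq1 : ∑ s, q s = 1)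
    (hac : ∀ s, q s = 0 → p s = 0)
    (hf : ∀ s, f s ∈ Set.Icc (0 : ℝ) b)
    (hb : 0 ≤ b) (hl : 0 < lam) (hlb : lam * b < 3) :
    lam * ((∑ s, p s * f s) - (∑ s, q s * f s)) ≤
      (∑ s, p s * Real.log (p s / q s)) +
      lam^2 * (∑ s, q s * (f s - ∑ s', q s' * f s')^2) / (2*(1 - lam*b/3)) := by
  set m := ∑ s, q s * f s with hm
  set K := ∑ s, p s * Real.log (p s / q s) with hK
  set V := ∑ s, q s * (f s - m)^2 with hV
  set d := 2*(1 - lam*b/3) with hd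
  have hd0 : 0 < d := by rw [hd]; nlinarith
  have hm0 : 0 ≤ m := Finset.sum_nonneg fun s _ => mul_nonneg (hq0 s) (hf s).1
  -- pointwise exp bound
  have hexp : ∀ s, Real.exp (lam * (f s - m)) ≤
      1 + lam * (f s - m) + (lam * (f s - m))^2 / d := by
    intro s
    apply expC' _ (by positivity) hlb
    have h1 : f s - m ≤ b := by
      have := (hf s).2
      linarith
    nlinarith
  -- step 1: Gibbs
  have step1 : (∑ s, p s * (lam * (f s - m))) - K ≤
      (∑ s, q s * Real.exp (lam * (f s - m))) - 1 := by
    rw [hK, ← hp1]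
    rw [← Finset.sum_sub_distrib, ← Finset.sum_sub_distrib]
    exact Finset.sum_le_sum fun s _ => gibbs_term (hp0 s) (hq0 s) (hac s)
  -- step 2: MGF bound
  have step2 : (∑ s, q s * Real.exp (lam * (f s - m))) ≤ 1 + lam^2 * V / d := by
    have h1 : (∑ s, q s * Real.exp (lam * (f s - m))) ≤
        ∑ s, (q s + lam * (q s * f s - q s * m) + lam^2/d * (q s * (f s - m)^2)) := by
      apply Finset.sum_le_sum
      intro s _
      have := mul_le_mul_of_nonneg_left (hexp s) (hq0 s)
      calc q s * Real.exp (lam * (f s - m))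
          ≤ q s * (1 + lam * (f s - m) + (lam * (f s - m))^2 / d) := this
        _ = q s + lam * (q s * f s - q s * m) + lam^2/d * (q s * (f s - m)^2) := by
            field_simp
    rw [Finset.sum_add_distrib, Finset.sum_add_distrib, ← Finset.mul_sum, ← Finset.mul_sum,
      Finset.sum_sub_distrib, ← Finset.sum_mul] at h1
    rw [hq1, ← hm] at h1
    calc (∑ s, q s * Real.exp (lam * (f s - m)))
        ≤ 1 + lam * (m - 1 * m) + lam^2/d * V := h1
      _ = 1 + lam^2 * V / d := by ring
  -- combine
  have hlhs : lam * ((∑ s, p s * f s) - m) = ∑ s, p s * (lam * (f s - m)) := by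
    calc lam * ((∑ s, p s * f s) - m)
        = lam * (∑ s, p s * f s) - lam * m * (∑ s, p s) := by rw [hp1]; ring
      _ = (∑ s, lam * (p s * f s)) - (∑ s, lam * m * p s) := by
          rw [← Finset.mul_sum, ← Finset.mul_sum]
      _ = ∑ s, p s * (lam * (f s - m)) := by
          rw [← Finset.sum_sub_distrib]
          exact Finset.sum_congr rfl fun s _ => by ring
  rw [hlhs]
  linarith

set_option maxHeartbeats 1600000 in
/-- Bernstein-type inequality via KL divergence (Lemma on finite sets):
for probability mass functions `p, q` on a finite set `S` with `p ≪ q` and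
`f : S → [0, b]`, `p f − q f ≤ √(2 Var_q(f) KL(p‖q)) + (b/3) KL(p‖q)`. -/
theorem bernstein_via_kl {S : Type*} [Fintype S] (p q : S → ℝ) (f : S → ℝ) (b : ℝ)
    (hp0 : ∀ s, 0 ≤ p s) (hp1 : ∑ s, p s = 1)
    (hq0 : ∀ s, 0 ≤ q s) (hq1 : ∑ s, q s = 1)
    (hac : ∀ s, q s = 0 → p s = 0)
    (hf : ∀ s, f s ∈ Set.Icc (0 : ℝ) b) :
    (∑ s, p s * f s) - (∑ s, q s * f s) ≤
      Real.sqrt (2 * (∑ s, q s * (f s - ∑ s', q s' * f s') ^ 2) *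
          (∑ s, p s * Real.log (p s / q s))) +
        b / 3 * (∑ s, p s * Real.log (p s / q s)) := by
  have hS : Nonempty S := by
    by_contra h
    rw [not_nonempty_iff] at h
    rw [Finset.univ_eq_empty, Finset.sum_empty] at hp1
    norm_num at hp1
  set m := ∑ s', q s' * f s' with hm
  set K := ∑ s, p s * Real.log (p s / q s) with hK
  set V := ∑ s, q s * (f s - m) ^ 2 with hV
  set X := (∑ s, p s * f s) - (∑ s, q s * f s) with hX
  have hb0 : 0 ≤ b := le_trans (hf (Classical.arbitrary S)).1 (hf (Classical.arbitrary S)).2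
  have hK0 : 0 ≤ K := by
    have h1 : (∑ s, p s) - (∑ s, q s) ≤ K := by
      rw [hK, ← Finset.sum_sub_distrib]
      exact Finset.sum_le_sum fun s _ => kl_term (hp0 s) (hq0 s) (hac s)
    rw [hp1, hq1] at h1
    linarith
  have hV0 : 0 ≤ V := Finset.sum_nonneg fun s _ => mul_nonneg (hq0 s) (sq_nonneg _)
  rcases eq_or_lt_of_le hb0 with hb | hb
  · -- b = 0 : f identically 0
    have hf0 : ∀ s, f s = 0 := fun s => le_antisymm (hb ▸ (hf s).2) (hf s).1
    have hX0 : X = 0 := by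
      rw [hX]
      simp [hf0]
    have hV0' : V = 0 := by
      rw [hV, hm]
      simp [hf0]
    rw [hX0, hV0']
    rw [← hb]
    simp [Real.sqrt_zero]
  · -- b > 0
    have hcore : ∀ lam : ℝ, 0 < lam → lam * b < 3 →
        X ≤ K / lam + lam * V / (2*(1 - lam*b/3)) := by
      intro lam hl hlb
      have hd0 : (0:ℝ) < 2*(1 - lam*b/3) := by nlinarith
      have h := bern_core p q f b lam hp0 hp1 hq0 hq1 hac hf hb0 hl hlb
      rw [← hm, ← hK, ← hV, ← hX] at h
      have h2 : X ≤ (K + lam^2 * V / (2*(1 - lam*b/3))) / lam := by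
        rw [le_div_iff₀ hl]
        nlinarith [h]
      calc X ≤ (K + lam^2 * V / (2*(1 - lam*b/3))) / lam := h2
        _ = K / lam + lam * V / (2*(1 - lam*b/3)) := by
            field_simp
    clear_value m K V X
    rcases eq_or_lt_of_le hK0 with hKz | hKpos
    · -- K = 0
      rw [← hKz]
      simp only [mul_zero, Real.sqrt_zero, add_zero]
      apply le_of_forall_pos_le_add
      intro ε hε
      set lam := min (3/(2*b)) (ε/(V+1)) with hlam
      have hl : 0 < lam := lt_min (by positivity) (by positivity)
      have hlb : lam * b < 3 := by
        have h1 : lam ≤ 3/(2*b) := min_le_left _ _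
        have h2 : lam * b ≤ 3/(2*b) * b := mul_le_mul_of_nonneg_right h1 hb0
        have h3 : 3/(2*b) * b = 3/2 := by field_simp
        linarith
      have hx := hcore lam hl hlb
      rw [← hKz] at hx
      have hd1 : (1:ℝ) ≤ 2*(1 - lam*b/3) := by
        have h1 : lam ≤ 3/(2*b) := min_le_left _ _
        have h2 : lam * b ≤ 3/2 := by
          have := mul_le_mul_of_nonneg_right h1 hb0
          have h3 : 3/(2*b) * b = 3/2 := by field_simp
          linarith
        linarith
      have h4 : lam * V / (2*(1 - lam*b/3)) ≤ lam * V :=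
        div_le_self (by positivity) hd1
      have h5 : lam * V ≤ ε := by
        have h6 : lam ≤ ε/(V+1) := min_le_right _ _
        have h7 : lam * V ≤ ε/(V+1) * V := mul_le_mul_of_nonneg_right h6 hV0
        have h8 : ε/(V+1) * V ≤ ε := by
          rw [div_mul_eq_mul_div, div_le_iff₀ (by positivity)]
          nlinarith
        linarith
      have h9 : (0:ℝ)/lam = 0 := zero_div lam
      linarith [hx]
    · rcases eq_or_lt_of_le hV0 with hVz | hVpos
      · -- V = 0
        rw [← hVz]
        simp only [mul_zero, zero_mul, Real.sqrt_zero, zero_add]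
        apply le_of_forall_pos_le_add
        intro ε hε
        set lam := K/(K*b/3 + ε) with hlam
        have hde : (0:ℝ) < K*b/3 + ε := by positivity
        have hl : 0 < lam := by positivity
        have hlb : lam * b < 3 := by
          rw [hlam, div_mul_eq_mul_div, div_lt_iff₀ hde]
          nlinarith
        have hx := hcore lam hl hlb
        rw [← hVz] at hx
        have h1 : K/lam = K*b/3 + ε := by
          rw [hlam]
          field_simp
        have h2 : lam * 0 / (2*(1 - lam*b/3)) = 0 := by simp
        rw [h1, h2] at hx
        linarith
      · -- V > 0, K > 0
        set t := Real.sqrt (2*K/V) with ht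
        have ht0 : 0 < t := Real.sqrt_pos.2 (by positivity)
        have ht2 : t^2 = 2*K/V := Real.sq_sqrt (by positivity)
        have h2K : t^2 * V = 2*K := by
          rw [ht2]; field_simp
        have hden : (0:ℝ) < 1 + t*b/3 := by positivity
        set lam := t/(1 + t*b/3) with hlam
        have hl : 0 < lam := by positivity
        have hlb : lam * b < 3 := by
          rw [hlam, div_mul_eq_mul_div, div_lt_iff₀ hden]
          nlinarith
        have hx := hcore lam hl hlb
        have hsq : Real.sqrt (2*V*K) = t*V := by
          rw [show 2*V*K = (2*K/V)*V^2 by field_simp,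
            Real.sqrt_mul (by positivity) (V^2), Real.sqrt_sq hV0, ← ht]
        clear_value t lam
        have hone : 1 - lam*b/3 = 1/(1+t*b/3) := by
          rw [hlam]; field_simp; ring
        have hA : lam * V / (2*(1 - lam*b/3)) = t*V/2 := by
          rw [hone, hlam]
          field_simp
        have hB : K/lam = K/t + K*b/3 := by
          rw [hlam]
          field_simp
        have hC : K/t = t*V/2 := by
          rw [div_eq_iff ht0.ne']
          nlinarith
        rw [hsq]
        rw [hA, hB, hC] at hx
        linarith
end

section
/- Define r(t) = t·log²(t) / (t·log t + 1 − t) for t > 0, t ≠ 1. Then r(t) ≤ 2 for all t ∈ (0,1), and r(t) ≤ log(t) + 2 for all t > 1. Consequently, for probability vectors p, q on a finite set with p(i)/q(i) ≤ 1/γ for all i, one has Σ_i p(i) log²(p(i)/q(i)) ≤ log(e²/γ) · KL(p ‖ q). -/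
open Finset Real

private lemma aux_g_pos {t : ℝ} (ht : 0 < t) (ht1 : t ≠ 1) :
    0 < t * Real.log t + 1 - t := by
  have h1t : (1:ℝ)/t ≠ 1 := by
    intro h; apply ht1; field_simp at h; linarith
  have h := Real.log_lt_sub_one_of_pos (by positivity : (0:ℝ) < 1/t) h1t
  rw [Real.log_div one_ne_zero ht.ne', Real.log_one, zero_sub] at h
  have h2 := mul_lt_mul_of_pos_left h ht
  rw [mul_sub, mul_one_div_cancel ht.ne', mul_neg, mul_one] at h2
  linarith

private lemma hasDeriv_tlogsq {x : ℝ} (hx : x ≠ 0) :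
    HasDerivAt (fun t => t * Real.log t ^ 2) (Real.log x ^ 2 + 2 * Real.log x) x := by
  have h := (Real.hasDerivAt_log hx).pow 2
  have h2 : HasDerivAt (fun t => t * Real.log t ^ 2) _ x := (hasDerivAt_id x).mul h
  convert h2 using 1
  simp only [id]
  field_simp
  ring

private lemma hasDeriv_A {x : ℝ} (hx : 0 < x) :
    HasDerivAt (fun t => 2 * (t * Real.log t + 1 - t) - t * Real.log t ^ 2)
      (-(Real.log x ^ 2)) x := by
  have h1 := Real.hasDerivAt_mul_log hx.ne'
  have h2 := hasDeriv_tlogsq hx.ne'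
  have h3 : HasDerivAt (fun t => 2 * (t * Real.log t + 1 - t) - t * Real.log t ^ 2) _ x :=
    (((h1.add_const 1).sub (hasDerivAt_id x)).const_mul 2).sub h2
  convert h3 using 1
  ring

private lemma hasDeriv_B {x : ℝ} (hx : 0 < x) :
    HasDerivAt (fun t => (Real.log t + 2) * (t * Real.log t + 1 - t) - t * Real.log t ^ 2)
      (Real.log x + x⁻¹ - 1) x := by
  have h1 := Real.hasDerivAt_mul_log hx.ne'
  have h2 := hasDeriv_tlogsq hx.ne'
  have hg := (h1.add_const 1).sub (hasDerivAt_id x)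
  have hl := (Real.hasDerivAt_log hx.ne').add_const 2
  have h3 : HasDerivAt
      (fun t => (Real.log t + 2) * (t * Real.log t + 1 - t) - t * Real.log t ^ 2) _ x :=
    (hl.mul hg).sub h2
  convert h3 using 1
  simp only [id, Pi.sub_apply]
  field_simp
  ring

private lemma aux_A {t : ℝ} (ht : 0 < t) (ht1 : t ≤ 1) :
    t * Real.log t ^ 2 ≤ 2 * (t * Real.log t + 1 - t) := by
  have hanti : AntitoneOn
      (fun t => 2 * (t * Real.log t + 1 - t) - t * Real.log t ^ 2) (Set.Ioi 0) := by
    apply antitoneOn_of_deriv_nonpos (convex_Ioi 0)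
    · intro x hx
      exact (hasDeriv_A hx).continuousAt.continuousWithinAt
    · intro x hx
      rw [interior_Ioi] at hx
      exact (hasDeriv_A hx).differentiableAt.differentiableWithinAt
    · intro x hx
      rw [interior_Ioi] at hx
      rw [(hasDeriv_A hx).deriv]
      simp [sq_nonneg]
  have h0 := hanti (Set.mem_Ioi.mpr ht) (Set.mem_Ioi.mpr one_pos) ht1
  simp only [Real.log_one] at h0
  norm_num at h0
  linarith

private lemma aux_B {t : ℝ} (ht : 1 ≤ t) :
    t * Real.log t ^ 2 ≤ (Real.log t + 2) * (t * Real.log t + 1 - t) := by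
  have hmono : MonotoneOn
      (fun t => (Real.log t + 2) * (t * Real.log t + 1 - t) - t * Real.log t ^ 2)
      (Set.Ici 1) := by
    apply monotoneOn_of_deriv_nonneg (convex_Ici 1)
    · intro x hx
      have hx0 : (0:ℝ) < x := lt_of_lt_of_le one_pos hx
      exact (hasDeriv_B hx0).continuousAt.continuousWithinAt
    · intro x hx
      rw [interior_Ici] at hx
      have hx0 : (0:ℝ) < x := lt_trans one_pos hx
      exact (hasDeriv_B hx0).differentiableAt.differentiableWithinAt
    · intro x hx
      rw [interior_Ici] at hx
      have hx0 : (0:ℝ) < x := lt_trans one_pos hx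
      rw [(hasDeriv_B hx0).deriv]
      have h := Real.log_le_sub_one_of_pos (show (0:ℝ) < x⁻¹ by positivity)
      rw [Real.log_inv] at h
      linarith
  have h0 := hmono (Set.mem_Ici.mpr le_rfl) (Set.mem_Ici.mpr ht) ht
  simp only [Real.log_one] at h0
  norm_num at h0
  linarith

private lemma aux_key {t C : ℝ} (ht : 0 < t) (hC2 : 2 ≤ C)
    (hB : 1 < t → Real.log t + 2 ≤ C) :
    t * Real.log t ^ 2 ≤ C * (t * Real.log t + 1 - t) := by
  rcases lt_trichotomy t 1 with h | h | h
  · have hg := aux_g_pos ht h.ne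
    have hA := aux_A ht h.le
    nlinarith
  · norm_num [h]
  · have hg := aux_g_pos ht h.ne'
    have hB' := aux_B h.le
    have hC := hB h
    nlinarith

/-- Ratio bounds for `r(t) = t log²(t) / (t log t + 1 − t)` and the resulting bound of the
second log-moment by the KL divergence: `r(t) ≤ 2` on `(0,1)`, `r(t) ≤ log t + 2` on
`(1,∞)`, and consequently `Σ_i p(i) log²(p(i)/q(i)) ≤ log(e²/γ) · KL(p‖q)` whenever all
likelihood ratios are at most `1/γ`. -/
theorem log_sq_moment_vs_kl {S : Type*} [Fintype S] (p q : S → ℝ) (γ : ℝ)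
    (hγ : γ ∈ Set.Ioo (0 : ℝ) 1)
    (hp0 : ∀ s, 0 ≤ p s) (hp1 : ∑ s, p s = 1)
    (hq0 : ∀ s, 0 ≤ q s) (hq1 : ∑ s, q s = 1)
    (hac : ∀ s, q s = 0 → p s = 0)
    (hratio : ∀ s, 0 < q s → p s / q s ≤ 1 / γ) :
    (∀ t : ℝ, t ∈ Set.Ioo (0 : ℝ) 1 →
        t * Real.log t ^ 2 / (t * Real.log t + 1 - t) ≤ 2) ∧
    (∀ t : ℝ, 1 < t →
        t * Real.log t ^ 2 / (t * Real.log t + 1 - t) ≤ Real.log t + 2) ∧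
    (∑ s, p s * Real.log (p s / q s) ^ 2) ≤
        Real.log (Real.exp 2 / γ) * (∑ s, p s * Real.log (p s / q s)) := by
  obtain ⟨hγ0, hγ1⟩ := hγ
  have hCval : Real.log (Real.exp 2 / γ) = 2 - Real.log γ := by
    rw [Real.log_div (Real.exp_ne_zero 2) hγ0.ne', Real.log_exp]
  have hlogγ : Real.log γ < 0 := Real.log_neg hγ0 hγ1
  set C := Real.log (Real.exp 2 / γ) with hCdef
  have hC2 : 2 ≤ C := by rw [hCval]; linarith
  have hC0 : 0 < C := lt_of_lt_of_le two_pos hC2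
  refine ⟨?_, ?_, ?_⟩
  · rintro t ⟨ht0, ht1⟩
    rw [div_le_iff₀ (aux_g_pos ht0 (ne_of_lt ht1))]
    exact aux_A ht0 ht1.le
  · intro t ht
    rw [div_le_iff₀ (aux_g_pos (by linarith) (by linarith))]
    exact aux_B ht.le
  · have hterm : ∀ s, p s * Real.log (p s / q s) ^ 2 ≤
        C * (p s * Real.log (p s / q s) + q s - p s) := by
      intro s
      rcases eq_or_lt_of_le (hq0 s) with hq | hq
      · have hp : p s = 0 := hac s hq.symm
        simp [hp, ← hq]
      · rcases eq_or_lt_of_le (hp0 s) with hp | hp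
        · rw [← hp]
          norm_num
          positivity
        · set t := p s / q s with hts
          have ht : 0 < t := div_pos hp hq
          have hpt : p s = q s * t := by rw [hts]; field_simp
          have hkey := aux_key ht hC2 (fun h1 => by
            have hle : t ≤ 1/γ := hratio s hq
            have hll : Real.log t ≤ Real.log (1/γ) := Real.log_le_log ht hle
            rw [Real.log_div one_ne_zero hγ0.ne', Real.log_one, zero_sub] at hll
            rw [hCval]
            linarith)
          calc p s * Real.log t ^ 2 = q s * (t * Real.log t ^ 2) := by
                rw [hpt]; ring
            _ ≤ q s * (C * (t * Real.log t + 1 - t)) :=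
                mul_le_mul_of_nonneg_left hkey hq.le
            _ = C * (p s * Real.log t + q s - p s) := by rw [hpt]; ring
    calc (∑ s, p s * Real.log (p s / q s) ^ 2)
        ≤ ∑ s, C * (p s * Real.log (p s / q s) + q s - p s) :=
          Finset.sum_le_sum fun s _ => hterm s
      _ = C * (∑ s, p s * Real.log (p s / q s)) := by
          rw [← Finset.mul_sum]
          congr 1
          rw [Finset.sum_sub_distrib, Finset.sum_add_distrib, hp1, hq1]
          ring
end

section
/- For any ε > 0, the function g(x) = x · log²(1 + ε/x) defined for x > 0 satisfies g(x) ≤ 4ε for all x > 0. -/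
open Real

/-- For any `ε > 0` and all `x > 0`, `x · log²(1 + ε/x) ≤ 4 ε`. -/
theorem x_log_sq_le (ε : ℝ) (hε : 0 < ε) :
    ∀ x : ℝ, 0 < x → x * Real.log (1 + ε / x) ^ 2 ≤ 4 * ε := by
  intro x hx
  set t : ℝ := ε / x with ht
  have htpos : 0 < t := div_pos hε hx
  have hs : 0 ≤ Real.sqrt t := Real.sqrt_nonneg t
  -- log (1+t) ≤ 2 √t
  have h1 : 1 + t ≤ Real.exp (2 * Real.sqrt t) := by
    have h2 : (1 + Real.sqrt t) ^ 2 ≤ Real.exp (Real.sqrt t) ^ 2 := by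
      have := Real.add_one_le_exp (Real.sqrt t)
      nlinarith
    calc 1 + t = 1 + Real.sqrt t ^ 2 := by rw [Real.sq_sqrt htpos.le]
      _ ≤ (1 + Real.sqrt t) ^ 2 := by nlinarith
      _ ≤ Real.exp (Real.sqrt t) ^ 2 := h2
      _ = Real.exp (2 * Real.sqrt t) := by
          rw [← Real.exp_nat_mul]; norm_num [mul_comm]
  have hlog : Real.log (1 + t) ≤ 2 * Real.sqrt t :=
    (Real.log_le_iff_le_exp (by linarith)).2 h1
  have hlognn : 0 ≤ Real.log (1 + t) :=
    Real.log_nonneg (by linarith)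
  have hsq : Real.log (1 + t) ^ 2 ≤ 4 * t := by
    have := Real.sq_sqrt htpos.le
    nlinarith
  have : x * Real.log (1 + t) ^ 2 ≤ x * (4 * t) :=
    mul_le_mul_of_nonneg_left hsq hx.le
  calc x * Real.log (1 + t) ^ 2 ≤ x * (4 * t) := this
    _ = 4 * ε := by rw [ht]; field_simp
end

section
/- Performance-difference lemma: in a finite-horizon MDP with horizon H, for any two policies π and π′, V₁^π(s₁) − V₁^{π′}(s₁) = E_π[Σ_{h=1}^H (π_h − π′_h) Q_h^{π′}(s_h)], where (π_h − π′_h) Q_h^{π′}(s) = Σ_a (π_h(a|s) − π′_h(a|s)) Q_h^{π′}(s,a) and the expectation is over trajectories generated by π. -/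
open Finset Real

def IsKernel {S A : Type*} [Fintype S] (P : ℕ → S → A → S → ℝ) : Prop :=
  ∀ h s a, (∀ s', 0 ≤ P h s a s') ∧ ∑ s', P h s a s' = 1

def IsPolicy {S A : Type*} [Fintype A] (p : ℕ → S → A → ℝ) : Prop :=
  ∀ h s, (∀ a, 0 ≤ p h s a) ∧ ∑ a, p h s a = 1

/-- Value function of a policy (backward recursion on remaining steps `n`, current step `h`). -/
noncomputable def val {S A : Type*} [Fintype S] [Fintype A]
    (P : ℕ → S → A → S → ℝ) (r : ℕ → S → A → ℝ) (p : ℕ → S → A → ℝ) :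
    ℕ → ℕ → S → ℝ
  | 0, _, _ => 0
  | n + 1, h, s =>
      ∑ a, p h s a * (r h s a + ∑ s', P h s a s' * val P r p n (h + 1) s')

/-- Expected sum `E_p[Σ_h g(h, s_h)]` along a trajectory generated by policy `p`. -/
noncomputable def expSum {S A : Type*} [Fintype S] [Fintype A]
    (P : ℕ → S → A → S → ℝ) (p : ℕ → S → A → ℝ) (g : ℕ → S → ℝ) :
    ℕ → ℕ → S → ℝ
  | 0, _, _ => 0
  | n + 1, h, s =>
      g h s + ∑ a, p h s a * ∑ s', P h s a s' * expSum P p g n (h + 1) s'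

section PerformanceDifference

variable {S A : Type*} [Fintype S] [Fintype A] (P : ℕ → S → A → S → ℝ) (r : ℕ → S → A → ℝ)
  (p q : ℕ → S → A → ℝ)

/-- The action value `Q_h^q(s, a)` when `n` steps remain after step `h`. -/
noncomputable def qval (n h : ℕ) (s : S) (a : A) : ℝ :=
  r h s a + ∑ s', P h s a s' * val P r q n (h + 1) s'

theorem val_succ (n h : ℕ) (s : S) :
    val P r p (n + 1) h s = ∑ a, p h s a * qval P r p n h s a :=
  rfl

/-- Adding and subtracting `∑ a, p h s a * Q_h^q(s, a)` splits the one-step difference into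
the advantage term and the propagated difference of the next values. -/
theorem val_succ_sub_val_succ (n h : ℕ) (s : S) :
    val P r p (n + 1) h s - val P r q (n + 1) h s =
      ∑ a, (p h s a - q h s a) * qval P r q n h s a +
        ∑ a, p h s a * ∑ s', P h s a s' * (val P r p n (h + 1) s' - val P r q n (h + 1) s') := by
  simp only [val_succ, qval, mul_sub, sub_mul, mul_add, sum_sub_distrib, sum_add_distrib]
  ring

theorem val_sub_val_eq_expSum {H n h : ℕ} (hH : h + n = H) (s : S) :
    val P r p n h s - val P r q n h s =
      expSum P p (fun k s => ∑ a, (p k s a - q k s a) * qval P r q (H - (k + 1)) k s a) n h s := by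
  induction n generalizing h s with
  | zero => exact sub_self 0
  | succ n ih =>
    have hn : H - (h + 1) = n := by omega
    simp_rw [val_succ_sub_val_succ, expSum, hn, ih (h := h + 1) (by omega)]

end PerformanceDifference

theorem performance_difference_general {S A : Type*} [Fintype S] [Fintype A]
    (H : ℕ) (P : ℕ → S → A → S → ℝ) (r : ℕ → S → A → ℝ) (p q : ℕ → S → A → ℝ) (s₁ : S) :
    val P r p H 0 s₁ - val P r q H 0 s₁ =
      expSum P p
        (fun h s => ∑ a, (p h s a - q h s a) *
          (r h s a + ∑ s', P h s a s' * val P r q (H - (h + 1)) (h + 1) s'))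
        H 0 s₁ :=
  val_sub_val_eq_expSum P r p q (zero_add H) s₁

/-- Performance-difference lemma:
`V₁^π(s₁) − V₁^{π'}(s₁) = E_π[Σ_{h=1}^H (π_h − π'_h) Q_h^{π'}(s_h)]`, where
`Q_h^{π'}(s,a) = r_h(s,a) + p_h V_{h+1}^{π'}(s,a)`. -/
theorem performance_difference {S A : Type*} [Fintype S] [Fintype A]
    (H : ℕ) (P : ℕ → S → A → S → ℝ) (r : ℕ → S → A → ℝ) (p q : ℕ → S → A → ℝ) (s₁ : S)
    (hP : IsKernel P) (hp : IsPolicy p) (hq : IsPolicy q) :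
    val P r p H 0 s₁ - val P r q H 0 s₁ =
      expSum P p
        (fun h s => ∑ a, (p h s a - q h s a) *
          (r h s a + ∑ s', P h s a s' * val P r q (H - (h + 1)) (h + 1) s'))
        H 0 s₁ :=
  performance_difference_general H P r p q s₁
end
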